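/- Let S be a finite state set and let 𝒯, 𝒯̂ : S × S → [0,1] be two transition systems (Markov kernels) on S. Fix a start state s ∈ S, a horizon n ≥ 1, and a set G ⊆ S of safe states, and let μ_{s⊨φ} and μ̂_{s⊨φ} be the probabilities, under the Markov measures on length-n traces of 𝒯 and of 𝒯̂ respectively started at s, that every state of the trace lies in G. Let ε > 0 and δ > 0, and suppose D_TV(𝒯(·∣s̄), 𝒯̂(·∣s̄)) ≤ α for every s̄ ∈ S, with α ≤ ε/(2n). If X₁, …, X_m are i.i.d. {0,1}-valued random variables, each being the indicator that an independently sampled length-n trace of 𝒯̂ started at s has all its states in G (so each X_j is Bernoulli with mean μ̂_{s⊨φ}), and m ≥ (2/ε²)·log(2/δ), then with probability at least 1 − δ the empirical mean satisfies |(1/m)·Σ_{j=1}^m X_j − μ_{s⊨φ}| ≤ ε; that is, sampling m traces from the approximate model yields an ε-approximate estimate of the bounded-safety probability under the true model. -/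

import Mathlib

/-!
Unrolling the first step of a trace gives the recursion
`safeProb T s (n+1) G = [s ∈ G] · ∑ s', T s s' · safeProb T s' n G`. Comparing the recursions for
`T` and `That`, each step costs at most the total variation distance `α` (the continuation
probabilities lie in `[0,1]`), so the two safety probabilities differ by at most `n α ≤ ε/2`.
The indicators `X j` are independent, `[0,1]`-valued, with mean the approximate safety
probability, so by Hoeffding's inequality their empirical mean misses it by `ε/2` with
probability at most `2 exp (-m ε² / 2) ≤ δ`.
-/

open MeasureTheory ProbabilityTheory

open Classical in
noncomputable def safeProb {S : Type*} [Fintype S] (T : S → S → ℝ)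
    (s : S) (n : ℕ) (G : Set S) : ℝ :=
  ∑ τ : Fin (n + 1) → S,
    if τ 0 = s ∧ ∀ i, τ i ∈ G then ∏ i : Fin n, T (τ i.castSucc) (τ i.succ) else 0

/-- Total variation distance between two distributions on a finite set. -/
noncomputable def tvDist {S : Type*} [Fintype S] (p q : S → ℝ) : ℝ :=
  (1 / 2) * ∑ s, |p s - q s|

section SafeProb

variable {S : Type*} [Fintype S]

open Classical in
lemma safeProb_zero (T : S → S → ℝ) (s : S) (G : Set S) :
    safeProb T s 0 G = if s ∈ G then 1 else 0 := by
  rw [safeProb, ← (Equiv.funUnique (Fin 1) S).symm.sum_comp]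
  simp [ite_and]

open Classical in
lemma safeProb_succ (T : S → S → ℝ) (s : S) (n : ℕ) (G : Set S) :
    safeProb T s (n + 1) G = if s ∈ G then ∑ s', T s s' * safeProb T s' n G else 0 := by
  conv_lhs =>
    rw [safeProb, ← (Fin.consEquiv fun _ => S).sum_comp, Fintype.sum_prod_type]
    simp only [Fin.consEquiv_apply, Fin.forall_fin_succ (n := n + 1), Fin.cons_zero, Fin.cons_succ,
      Fin.prod_univ_succ, Fin.castSucc_zero, ← Fin.succ_castSucc, ite_and]
  rw [Fintype.sum_eq_single s fun x hx => by simp [hx]]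
  simp only [if_true]
  split_ifs
  · simp only [safeProb, Finset.mul_sum]
    rw [Finset.sum_comm]
    simp [ite_and, mul_ite, eq_comm]
  · simp

lemma tvDist_nonneg (p q : S → ℝ) : 0 ≤ tvDist p q := by
  unfold tvDist
  positivity

lemma abs_sum_sub_mul_le_tvDist {p q f : S → ℝ} (hpq : ∑ x, p x = ∑ x, q x)
    (hf : ∀ x, f x ∈ Set.Icc 0 1) : |∑ x, (p x - q x) * f x| ≤ tvDist p q := by
  have hcenter : ∑ x, (p x - q x) * f x = ∑ x, (p x - q x) * (f x - 1 / 2) := by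
    simp only [mul_sub, Finset.sum_sub_distrib (g := fun x => (p x - q x) * (1 / 2)),
      ← Finset.sum_mul, Finset.sum_sub_distrib (f := p), hpq, sub_self, zero_mul, sub_zero]
  rw [hcenter, tvDist, Finset.mul_sum]
  refine (Finset.abs_sum_le_sum_abs _ _).trans (Finset.sum_le_sum fun x _ => ?_)
  rw [abs_mul, mul_comm]
  gcongr
  exact abs_sub_le_iff.2 ⟨by linarith [(hf x).2], by linarith [(hf x).1]⟩

lemma safeProb_nonneg {T : S → S → ℝ} (hT0 : ∀ s s', 0 ≤ T s s') (s : S) (n : ℕ) (G : Set S) :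
    0 ≤ safeProb T s n G := by
  classical
  exact Finset.sum_nonneg fun τ _ => by
    split_ifs
    exacts [Finset.prod_nonneg fun i _ => hT0 _ _, le_rfl]

lemma safeProb_le_one {T : S → S → ℝ} (hT0 : ∀ s s', 0 ≤ T s s') (hT1 : ∀ s, ∑ s', T s s' = 1)
    (s : S) (n : ℕ) (G : Set S) : safeProb T s n G ≤ 1 := by
  induction n generalizing s with
  | zero => rw [safeProb_zero]; split_ifs <;> norm_num
  | succ n ih =>
    rw [safeProb_succ]
    split_ifs
    · calc ∑ s', T s s' * safeProb T s' n G ≤ ∑ s', T s s' :=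
            Finset.sum_le_sum fun s' _ => mul_le_of_le_one_right (hT0 s s') (ih s')
        _ = 1 := hT1 s
    · exact zero_le_one

lemma abs_safeProb_sub_le {T T' : S → S → ℝ} (hT0 : ∀ s s', 0 ≤ T s s')
    (hT1 : ∀ s, ∑ s', T s s' = 1) (hT'0 : ∀ s s', 0 ≤ T' s s') (hT'1 : ∀ s, ∑ s', T' s s' = 1)
    {α : ℝ} (htv : ∀ s, tvDist (T s) (T' s) ≤ α) (s : S) (n : ℕ) (G : Set S) :
    |safeProb T s n G - safeProb T' s n G| ≤ n * α := by
  induction n generalizing s with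
  | zero => simp [safeProb_zero]
  | succ n ih =>
    rw [safeProb_succ, safeProb_succ]
    split_ifs
    ·
      have hsplit : ∑ s', T s s' * safeProb T s' n G - ∑ s', T' s s' * safeProb T' s' n G =
          ∑ s', (T s s' - T' s s') * safeProb T' s' n G +
            ∑ s', T s s' * (safeProb T s' n G - safeProb T' s' n G) := by
        rw [← Finset.sum_sub_distrib, ← Finset.sum_add_distrib]
        exact Finset.sum_congr rfl fun s' _ => by ring
      have hstep : |∑ s', (T s s' - T' s s') * safeProb T' s' n G| ≤ α :=
        (abs_sum_sub_mul_le_tvDist (by rw [hT1, hT'1]) fun s' =>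
          ⟨safeProb_nonneg hT'0 s' n G, safeProb_le_one hT'0 hT'1 s' n G⟩).trans (htv s)
      have hrest : |∑ s', T s s' * (safeProb T s' n G - safeProb T' s' n G)| ≤ n * α :=
        calc _ ≤ ∑ s', |T s s' * (safeProb T s' n G - safeProb T' s' n G)| :=
              Finset.abs_sum_le_sum_abs _ _
          _ ≤ ∑ s', T s s' * (n * α) := Finset.sum_le_sum fun s' _ => by
              rw [abs_mul, abs_of_nonneg (hT0 s s')]
              exact mul_le_mul_of_nonneg_left (ih s') (hT0 s s')
          _ = n * α := by rw [← Finset.sum_mul, hT1, one_mul]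
      calc _ ≤ α + n * α := hsplit ▸ (abs_add_le _ _).trans (add_le_add hstep hrest)
        _ = (n + 1 : ℕ) * α := by push_cast; ring
    · have := (tvDist_nonneg (T s) (T' s)).trans (htv s)
      simp only [sub_self, abs_zero]
      positivity

end SafeProb

lemma natCast_mul_le_of_le_div {n : ℕ} {α ε : ℝ} (hε : 0 ≤ ε) (hα : α ≤ ε / (2 * n)) :
    n * α ≤ ε / 2 := by
  rcases Nat.eq_zero_or_pos n with rfl | hn
  · simp only [Nat.cast_zero, zero_mul]
    positivity
  rw [← le_div_iff₀' (Nat.cast_pos.2 hn)]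
  exact hα.trans_eq (by ring)

lemma two_mul_exp_le_of_two_div_sq_mul_log_le {m : ℕ} {ε δ : ℝ} (hε : 0 < ε) (hδ : 0 < δ)
    (hm : 2 / ε ^ 2 * Real.log (2 / δ) ≤ m) :
    2 * Real.exp (-2 * (m * ε / 2) ^ 2 / m) ≤ δ := by
  have hlog : Real.log (2 / δ) ≤ m * ε ^ 2 / 2 := by
    rw [div_mul_eq_mul_div, div_le_iff₀ (by positivity)] at hm
    linarith
  have hexponent : -2 * (m * ε / 2) ^ 2 / m = -(m * ε ^ 2 / 2) := by
    -- for `m = 0` both sides vanish, the left one because `x / 0 = 0`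
    rcases eq_or_ne (m : ℝ) 0 with h | h
    · simp [h]
    · field_simp
  calc 2 * Real.exp (-2 * (m * ε / 2) ^ 2 / m) ≤ 2 * Real.exp (-Real.log (2 / δ)) := by
        rw [hexponent]
        gcongr
    _ = δ := by rw [Real.exp_neg, Real.exp_log (by positivity)]; field_simp

lemma natCast_mul_half_le_abs_sum_sub {ι : Type*} [Fintype ι] {x : ι → ℝ} {p p' ε : ℝ}
    (hclose : |p - p'| ≤ ε / 2) (hfar : ε < |1 / (Fintype.card ι : ℝ) * ∑ j, x j - p|) :
    Fintype.card ι * ε / 2 ≤ |∑ j, (x j - p')| := by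
  rcases (Fintype.card ι).eq_zero_or_pos with hι | hι
  · simp [hι]
  have hm : (0 : ℝ) < Fintype.card ι := Nat.cast_pos.2 hι
  have hscale :
      ∑ j, (x j - p') = Fintype.card ι * (1 / (Fintype.card ι : ℝ) * ∑ j, x j - p') := by
    rw [Finset.sum_sub_distrib, Finset.sum_const, Finset.card_univ, nsmul_eq_mul]
    field_simp
  rw [hscale, abs_mul, abs_of_pos hm, mul_div_assoc]
  gcongr
  linarith [abs_sub_le (1 / (Fintype.card ι : ℝ) * ∑ j, x j) p' p, abs_sub_comm p p']

section Hoeffding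

variable {Ω : Type*} [MeasurableSpace Ω] {P : Measure Ω}

lemma integral_eq_measureReal_of_forall_eq_zero_or_one {X : Ω → ℝ} (hX : Measurable X)
    (h01 : ∀ ω, X ω = 0 ∨ X ω = 1) : P[X] = P.real {ω | X ω = 1} := by
  have hind : X = {ω | X ω = 1}.indicator 1 := by
    ext ω
    rcases h01 ω with h | h <;> simp [h]
  conv_lhs => rw [hind]
  exact integral_indicator_one (hX (measurableSet_singleton 1))

lemma measureReal_le_abs_sum_sub_integral_le [IsProbabilityMeasure P] {ι : Type*} [Fintype ι]
    {X : ι → Ω → ℝ} (hindep : iIndepFun X P) (hmeas : ∀ i, AEMeasurable (X i) P)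
    (hX : ∀ i, ∀ᵐ ω ∂P, X i ω ∈ Set.Icc 0 1) {t : ℝ} (ht : 0 ≤ t) :
    P.real {ω | t ≤ |∑ i, (X i ω - P[X i])|} ≤
      2 * Real.exp (-2 * t ^ 2 / Fintype.card ι) := by
  set Y : Ω → ℝ := fun ω => ∑ i, (X i ω - P[X i])
  have hindep' : iIndepFun (fun i ω => X i ω - P[X i]) P :=
    hindep.comp (fun i x => x - ∫ ω, X i ω ∂P) fun _ => measurable_id.sub_const _
  have hY : HasSubgaussianMGF Y (∑ _i : ι, (‖(1 : ℝ) - 0‖₊ / 2) ^ 2) P :=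
    HasSubgaussianMGF.sum_of_iIndepFun hindep' fun i _ =>
      hasSubgaussianMGF_of_mem_Icc (hmeas i) (hX i)
  have hexp : -t ^ 2 / (2 * ((∑ _i : ι, (‖(1 : ℝ) - 0‖₊ / 2) ^ 2 : NNReal) : ℝ)) =
      -2 * t ^ 2 / Fintype.card ι := by
    norm_num
    ring
  calc P.real {ω | t ≤ |Y ω|} ≤ P.real ({ω | t ≤ Y ω} ∪ {ω | t ≤ (-Y) ω}) :=
        measureReal_mono fun ω hω => le_abs.1 (show t ≤ |Y ω| from hω)
    _ ≤ P.real {ω | t ≤ Y ω} + P.real {ω | t ≤ (-Y) ω} := measureReal_union_le _ _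
    _ ≤ _ := by
      rw [two_mul, ← hexp]
      exact add_le_add (hY.measure_ge_le ht) (hY.neg.measure_ge_le ht)

lemma ofReal_one_sub_le_of_measureReal_compl_le [IsProbabilityMeasure P] {E : Set Ω}
    (hE : MeasurableSet E) {δ : ℝ} (hδ : P.real Eᶜ ≤ δ) :
    ENNReal.ofReal (1 - δ) ≤ P E := by
  rw [ENNReal.ofReal_le_iff_le_toReal (measure_ne_top _ _), ← measureReal_def]
  linarith [probReal_compl_eq_one_sub (μ := P) hE]

end Hoeffding

theorem ambs_hoeffding_approximate_model_general {S : Type*} [Fintype S] (T That : S → S → ℝ)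
    (hT0 : ∀ s s', 0 ≤ T s s') (hT1 : ∀ s, ∑ s', T s s' = 1)
    (hThat0 : ∀ s s', 0 ≤ That s s') (hThat1 : ∀ s, ∑ s', That s s' = 1)
    (s : S) (n : ℕ) (G : Set S)
    (ε δ α : ℝ) (hε : 0 < ε) (hδ : 0 < δ)
    (htv : ∀ sb, tvDist (T sb) (That sb) ≤ α)
    (hα : α ≤ ε / (2 * n))
    {Ω : Type*} [MeasurableSpace Ω] (P : Measure Ω) [IsProbabilityMeasure P]
    (m : ℕ) (X : Fin m → Ω → ℝ)
    (hmeas : ∀ j, Measurable (X j))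
    (hindep : iIndepFun X P)
    (h01 : ∀ j ω, X j ω = 0 ∨ X j ω = 1)
    (hmean : ∀ j, P {ω | X j ω = 1} = ENNReal.ofReal (safeProb That s n G))
    (hm : 2 / ε ^ 2 * Real.log (2 / δ) ≤ (m : ℝ)) :
    ENNReal.ofReal (1 - δ) ≤
      P {ω | |(1 / (m : ℝ)) * ∑ j, X j ω - safeProb T s n G| ≤ ε} := by
  have hclose : |safeProb T s n G - safeProb That s n G| ≤ ε / 2 :=
    (abs_safeProb_sub_le hT0 hT1 hThat0 hThat1 htv s n G).trans
      (natCast_mul_le_of_le_div hε.le hα)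
  have hmeanX : ∀ j, P[X j] = safeProb That s n G := fun j => by
    rw [integral_eq_measureReal_of_forall_eq_zero_or_one (hmeas j) (h01 j), measureReal_def,
      hmean j, ENNReal.toReal_ofReal (safeProb_nonneg hThat0 s n G)]
  have htail : P.real {ω | m * ε / 2 ≤ |∑ j, (X j ω - P[X j])|} ≤ δ := by
    refine (measureReal_le_abs_sum_sub_integral_le hindep (fun j => (hmeas j).aemeasurable)
      (fun j => ae_of_all _ fun ω => ?_) (by positivity)).trans ?_
    · rcases h01 j ω with h | h <;> simp [h]
    · simpa only [Fintype.card_fin] using two_mul_exp_le_of_two_div_sq_mul_log_le hε hδ hm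
  refine ofReal_one_sub_le_of_measureReal_compl_le (measurableSet_le (by fun_prop)
    measurable_const) ((measureReal_mono fun ω hω => ?_).trans htail)
  simp only [Set.mem_ofPred_eq, hmeanX]
  simpa only [Fintype.card_fin] using
    natCast_mul_half_le_abs_sum_sub (x := fun j => X j ω) hclose (by simpa using hω)

/-- If the approximate transition system is everywhere within total
variation `α ≤ ε/(2n)` of the true one, then sampling `m ≥ (2/ε²)·log(2/δ)` i.i.d.
Bernoulli indicators of bounded safety of traces of the *approximate* system yields,
with probability at least `1 - δ`, an `ε`-approximate estimate of the bounded-safety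
probability under the *true* system. -/
theorem ambs_hoeffding_approximate_model {S : Type*} [Fintype S] (T That : S → S → ℝ)
    (hT0 : ∀ s s', 0 ≤ T s s') (hT1 : ∀ s, ∑ s', T s s' = 1)
    (hThat0 : ∀ s s', 0 ≤ That s s') (hThat1 : ∀ s, ∑ s', That s s' = 1)
    (s : S) (n : ℕ) (hn : 1 ≤ n) (G : Set S)
    (ε δ α : ℝ) (hε : 0 < ε) (hδ : 0 < δ)
    (htv : ∀ sb, tvDist (T sb) (That sb) ≤ α)
    (hα : α ≤ ε / (2 * n))
    {Ω : Type*} [MeasurableSpace Ω] (P : Measure Ω) [IsProbabilityMeasure P]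
    (m : ℕ) (X : Fin m → Ω → ℝ)
    (hmeas : ∀ j, Measurable (X j))
    (hindep : iIndepFun X P)
    (h01 : ∀ j ω, X j ω = 0 ∨ X j ω = 1)
    (hmean : ∀ j, P {ω | X j ω = 1} = ENNReal.ofReal (safeProb That s n G))
    (hm : 2 / ε ^ 2 * Real.log (2 / δ) ≤ (m : ℝ)) :
    ENNReal.ofReal (1 - δ) ≤
      P {ω | |(1 / (m : ℝ)) * ∑ j, X j ω - safeProb T s n G| ≤ ε} :=
  ambs_hoeffding_approximate_model_general T That hT0 hT1 hThat0 hThat1 s n G ε δ α hε hδ htv hα P m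
    X hmeas hindep h01 hmean hm
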